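/- If a_n := (−1/n) log p_n satisfies p_n = P_n(E_n) with P_n, Q_n, E_n as in the Bahadur setup (P_n(E_n) → 0, Q_n(E_n) → 1), and additionally (1/n) D(Q_n‖P_n) → D for some real D ≥ 0, then limsup a_n ≤ D. -/

import Mathlib

open Filter

/-- Kullback–Leibler divergence of two probability mass functions on a finite type,
with the convention `0 · log (0/·) = 0` (note `Real.log 0 = 0` in Mathlib). -/
noncomputable def klDiv {X : Type*} [Fintype X] (Q P : X → ℝ) : ℝ :=
  ∑ x, Q x * Real.log (Q x / P x)

/-- Log-sum inequality on a finset. -/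
lemma log_sum_ineq {X : Type*} (s : Finset X) (a b : X → ℝ)
    (ha : ∀ x, 0 ≤ a x) (hb : ∀ x, 0 ≤ b x) (hab : ∀ x, b x = 0 → a x = 0) :
    (∑ x ∈ s, a x) * Real.log ((∑ x ∈ s, a x) / (∑ x ∈ s, b x)) ≤
      ∑ x ∈ s, a x * Real.log (a x / b x) := by
  set A := ∑ x ∈ s, a x with hA
  set B := ∑ x ∈ s, b x with hB
  rcases eq_or_lt_of_le (Finset.sum_nonneg (fun x _ => ha x)) with h0 | hApos
  · -- A = 0, so all a = 0 on s
    have hall : ∀ x ∈ s, a x = 0 := by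
      intro x hx
      have := (Finset.sum_eq_zero_iff_of_nonneg (fun x _ => ha x)).mp h0.symm
      exact this x hx
    have hA0 : A = 0 := hA.trans h0.symm
    have hz : ∑ x ∈ s, a x * Real.log (a x / b x) = 0 :=
      Finset.sum_eq_zero (fun x hx => by rw [hall x hx]; ring)
    rw [hA0, hz]; simp
  · have hBpos : 0 < B := by
      rcases eq_or_lt_of_le (Finset.sum_nonneg (fun x _ => hb x)) with h0 | h
      · exfalso
        have hallb : ∀ x ∈ s, b x = 0 :=
          (Finset.sum_eq_zero_iff_of_nonneg (fun x _ => hb x)).mp h0.symm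
        have : A = 0 := Finset.sum_eq_zero (fun x hx => hab x (hallb x hx))
        exact absurd this (ne_of_gt hApos)
      · exact h
    -- pointwise: a x * log(A/B) ≤ a x * log(a x / b x) - a x + (A/B) * b x
    have key : ∀ x ∈ s, a x * Real.log (A / B) ≤
        a x * Real.log (a x / b x) - a x + (A / B) * b x := by
      intro x _
      rcases eq_or_lt_of_le (ha x) with h0 | hax
      · rw [← h0]
        have : 0 ≤ (A / B) * b x := mul_nonneg (div_nonneg hApos.le hBpos.le) (hb x)
        simpa using this
      · have hbx : 0 < b x := by
          rcases eq_or_lt_of_le (hb x) with h0 | h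
          · exact absurd (hab x h0.symm) (ne_of_gt hax)
          · exact h
        -- log(A/B) - log(a/b) = log((A/B)*(b/a)) ≤ (A/B)*(b/a) - 1
        have ht : (0:ℝ) < (A / B) * (b x / a x) :=
          mul_pos (div_pos hApos hBpos) (div_pos hbx hax)
        have hlog : Real.log ((A / B) * (b x / a x)) ≤ (A / B) * (b x / a x) - 1 :=
          Real.log_le_sub_one_of_pos ht
        have hsplit : Real.log ((A / B) * (b x / a x)) =
            Real.log (A / B) - Real.log (a x / b x) := by
          rw [Real.log_mul (ne_of_gt (div_pos hApos hBpos)) (ne_of_gt (div_pos hbx hax)),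
            Real.log_div (ne_of_gt hbx) (ne_of_gt hax),
            Real.log_div (ne_of_gt hax) (ne_of_gt hbx)]
          ring
        rw [hsplit] at hlog
        have := mul_le_mul_of_nonneg_left hlog (ha x)
        have hid : a x * ((A / B) * (b x / a x) - 1) = (A / B) * b x - a x := by
          field_simp
        rw [hid] at this
        linarith
    calc A * Real.log (A / B) = ∑ x ∈ s, a x * Real.log (A / B) := by
          rw [← Finset.sum_mul]
      _ ≤ ∑ x ∈ s, (a x * Real.log (a x / b x) - a x + (A / B) * b x) :=
          Finset.sum_le_sum key
      _ = (∑ x ∈ s, a x * Real.log (a x / b x)) - A + (A / B) * B := by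
          rw [Finset.sum_add_distrib, Finset.sum_sub_distrib, ← Finset.mul_sum]
      _ = ∑ x ∈ s, a x * Real.log (a x / b x) := by
          field_simp
          ring

lemma neg_one_le_mul_log {x : ℝ} (hx : 0 < x) (hx1 : x ≤ 1) : -1 ≤ x * Real.log x := by
  have h : Real.log x⁻¹ ≤ x⁻¹ - 1 := Real.log_le_sub_one_of_pos (inv_pos.mpr hx)
  rw [Real.log_inv] at h
  have := mul_le_mul_of_nonneg_left h hx.le
  have hid : x * (x⁻¹ - 1) = 1 - x := by field_simp
  rw [hid] at this
  nlinarith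

/-- KL divergence lower bound via the two-set partition. -/
lemma kl_lower {X : Type*} [Fintype X] (Qf Pf : X → ℝ) (s : Finset X)
    (hP0 : ∀ x, 0 ≤ Pf x) (hP1 : ∑ x, Pf x = 1)
    (hQ0 : ∀ x, 0 ≤ Qf x) (hQ1 : ∑ x, Qf x = 1)
    (hac : ∀ x, Pf x = 0 → Qf x = 0)
    (pp qq : ℝ) (hpp : pp = ∑ x ∈ s, Pf x) (hqq : qq = ∑ x ∈ s, Qf x)
    (hp01 : pp ∈ Set.Ioo (0:ℝ) 1) (hq01 : qq ∈ Set.Ioo (0:ℝ) 1) :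
    -(qq * Real.log pp) - 2 ≤ klDiv Qf Pf := by
  classical
  have hsplit : klDiv Qf Pf =
      (∑ x ∈ s, Qf x * Real.log (Qf x / Pf x)) +
      (∑ x ∈ sᶜ, Qf x * Real.log (Qf x / Pf x)) := by
    rw [klDiv, ← Finset.sum_add_sum_compl s]
  have hPc : ∑ x ∈ sᶜ, Pf x = 1 - pp := by
    have := Finset.sum_add_sum_compl s Pf
    rw [hP1] at this; linarith [hpp ▸ this]
  have hQc : ∑ x ∈ sᶜ, Qf x = 1 - qq := by
    have := Finset.sum_add_sum_compl s Qf
    rw [hQ1] at this; linarith [hqq ▸ this]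
  have h1 : qq * Real.log (qq / pp) ≤ ∑ x ∈ s, Qf x * Real.log (Qf x / Pf x) := by
    have := log_sum_ineq s Qf Pf hQ0 hP0 hac
    rw [← hpp, ← hqq] at this; exact this
  have h2 : (1 - qq) * Real.log ((1 - qq) / (1 - pp)) ≤
      ∑ x ∈ sᶜ, Qf x * Real.log (Qf x / Pf x) := by
    have := log_sum_ineq sᶜ Qf Pf hQ0 hP0 hac
    rw [hPc, hQc] at this; exact this
  obtain ⟨hpa, hpb⟩ := hp01
  obtain ⟨hqa, hqb⟩ := hq01
  have hlq : Real.log (qq / pp) = Real.log qq - Real.log pp :=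
    Real.log_div (ne_of_gt hqa) (ne_of_gt hpa)
  have hlq2 : Real.log ((1 - qq) / (1 - pp)) = Real.log (1 - qq) - Real.log (1 - pp) :=
    Real.log_div (by linarith) (by linarith)
  have e1 : -1 ≤ qq * Real.log qq := neg_one_le_mul_log hqa hqb.le
  have e2 : -1 ≤ (1 - qq) * Real.log (1 - qq) :=
    neg_one_le_mul_log (by linarith) (by linarith)
  have e3 : Real.log (1 - pp) ≤ 0 := Real.log_nonpos (by linarith) (by linarith)
  rw [hsplit]
  rw [hlq] at h1; rw [hlq2] at h2
  nlinarith

/-- Bahadur bound with convergent normalized divergences: if moreover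
`(1/n) D(Qₙ‖Pₙ) → D` for a real `D ≥ 0`, then `limsup (−1/n) log pₙ ≤ D`. -/
theorem bahadur_bound_of_divergence_limit
    {X : ℕ → Type*} [∀ n, Fintype (X n)]
    (P Q : ∀ n, X n → ℝ) (E : ∀ n, Finset (X n))
    (hP0 : ∀ n x, 0 ≤ P n x) (hP1 : ∀ n, ∑ x, P n x = 1)
    (hQ0 : ∀ n x, 0 ≤ Q n x) (hQ1 : ∀ n, ∑ x, Q n x = 1)
    (hac : ∀ n x, P n x = 0 → Q n x = 0)
    (p q : ℕ → ℝ)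
    (hp : ∀ n, p n = ∑ x ∈ E n, P n x) (hq : ∀ n, q n = ∑ x ∈ E n, Q n x)
    (hp01 : ∀ n, p n ∈ Set.Ioo (0 : ℝ) 1) (hq01 : ∀ n, q n ∈ Set.Ioo (0 : ℝ) 1)
    (hp0 : Tendsto p atTop (nhds 0)) (hq1 : Tendsto q atTop (nhds 1))
    (D : ℝ) (hD0 : 0 ≤ D)
    (hDlim : Tendsto (fun n : ℕ => (1 / (n : ℝ)) * klDiv (Q n) (P n)) atTop (nhds D)) :
    Filter.limsup (fun n : ℕ => (-1 / (n : ℝ)) * Real.log (p n)) atTop ≤ D := by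
  set f := fun n : ℕ => (-1 / (n : ℝ)) * Real.log (p n) with hf
  set g := fun n : ℕ => (q n)⁻¹ * ((1 / (n : ℝ)) * klDiv (Q n) (P n) + 2 / (n : ℝ)) with hg
  have hkl : ∀ n, -(q n * Real.log (p n)) - 2 ≤ klDiv (Q n) (P n) := fun n =>
    kl_lower (Q n) (P n) (E n) (hP0 n) (hP1 n) (hQ0 n) (hQ1 n) (hac n)
      (p n) (q n) (hp n) (hq n) (hp01 n) (hq01 n)
  have hfg : ∀ᶠ n in atTop, f n ≤ g n := by
    filter_upwards [eventually_ge_atTop 1] with n hn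
    have hn0 : (0:ℝ) < (n:ℝ) := by exact_mod_cast hn
    have hqn : 0 < q n := (hq01 n).1
    have h1 : -Real.log (p n) ≤ (klDiv (Q n) (P n) + 2) / q n := by
      rw [le_div_iff₀ hqn]; nlinarith [hkl n]
    have h2 := mul_le_mul_of_nonneg_left h1 (le_of_lt (by positivity : (0:ℝ) < 1 / n))
    calc f n = (1 / (n:ℝ)) * (-Real.log (p n)) := by rw [hf]; ring
      _ ≤ (1 / (n:ℝ)) * ((klDiv (Q n) (P n) + 2) / q n) := h2
      _ = g n := by rw [hg]; ring
  have hgD : Tendsto g atTop (nhds D) := by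
    have h1 : Tendsto (fun n : ℕ => (q n)⁻¹) atTop (nhds 1) := by
      simpa using hq1.inv₀ one_ne_zero
    have h2 : Tendsto (fun n : ℕ => 2 / (n : ℝ)) atTop (nhds 0) :=
      tendsto_const_div_atTop_nhds_zero_nat 2
    have := h1.mul (hDlim.add h2)
    rw [hg]
    simpa using this
  have hfpos : ∀ n, 0 ≤ f n := by
    intro n
    rcases Nat.eq_zero_or_pos n with h | h
    · simp [hf, h]
    · have hn0 : (0:ℝ) < (n:ℝ) := by exact_mod_cast h
      have hlog : Real.log (p n) < 0 :=
        Real.log_neg (hp01 n).1 (hp01 n).2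
      have key : 0 ≤ (1 / (n:ℝ)) * (-Real.log (p n)) :=
        mul_nonneg (by positivity) (by linarith)
      have heq : f n = (1 / (n:ℝ)) * (-Real.log (p n)) := by simp only [hf]; ring
      linarith
  have hcb : IsCoboundedUnder (· ≤ ·) atTop f :=
    IsCoboundedUnder.of_frequently_ge (Frequently.of_forall (fun n => hfpos n))
  have hbd : IsBoundedUnder (· ≤ ·) atTop g := hgD.isBoundedUnder_le
  calc Filter.limsup f atTop ≤ Filter.limsup g atTop := limsup_le_limsup hfg hcb hbd
    _ = D := hgD.limsup_eq
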